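/- For every complex number s with Re(s) > -1 and s ≠ 1, one has ∫₀^∞ t^s / cosh(t)^2 dt = 2^{1-s} · (1 - 2^{1-s}) · Γ(s+1) · ζ(s); equivalently, ζ(s) = 2^{s-1} / ((1 - 2^{1-s}) Γ(s+1)) · ∫₀^∞ t^s / cosh(t)^2 dt whenever additionally 1 - 2^{1-s} ≠ 0. -/

import Mathlib

open MeasureTheory Set Complex Filter Asymptotics

noncomputable def coshF : ℝ → ℂ := fun t ↦ 1 / (Real.cosh t : ℂ) ^ 2

lemma two_mul_cpow (z : ℂ) (hz0 : z ≠ 0) (k : ℕ) :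
    ((2 * k : ℕ) : ℂ) ^ z = (2 : ℂ) ^ z * (k : ℂ) ^ z := by
  rcases Nat.eq_zero_or_pos k with rfl | hk
  · simp [Complex.zero_cpow hz0]
  · have := Complex.mul_cpow_ofReal_nonneg (by norm_num : (0:ℝ) ≤ 2)
      (Nat.cast_nonneg (α := ℝ) k) z
    push_cast at this ⊢
    exact this

lemma eta_eq {z : ℂ} (hz : 1 < z.re) :
    ∑' n : ℕ, (-1 : ℂ) ^ n * ((n : ℂ) + 1) ^ (-z) = (1 - 2 ^ (1 - z)) * riemannZeta z := by
  have hz0 : z ≠ 0 := Complex.ne_zero_of_one_lt_re hz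
  set f : ℕ → ℂ := fun n ↦ 1 / (n : ℂ) ^ z with hf
  have hsumf : Summable f := Complex.summable_one_div_nat_cpow.mpr hz
  have hzeta : riemannZeta z = ∑' n, f n := zeta_eq_tsum_one_div_nat_cpow hz
  have hf0 : f 0 = 0 := by simp [hf, Complex.zero_cpow hz0]
  have hkey : ∀ k : ℕ, f (2 * k) = 2 ^ (-z) * f k := by
    intro k
    simp only [hf, two_mul_cpow z hz0 k, cpow_neg]
    simp [one_div, mul_inv]
    ring
  set g : ℕ → ℂ := fun n ↦ (-1 : ℂ) ^ n * ((n : ℂ) + 1) ^ (-z) with hg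
  have hgf : ∀ n : ℕ, g n = (-1 : ℂ) ^ n * f (n + 1) := by
    intro n
    simp only [hg, hf, cpow_neg, one_div]
    push_cast
    ring
  have hsucc : Summable (fun n ↦ f (n + 1)) := (summable_nat_add_iff 1).mpr hsumf
  have hge : ∀ k : ℕ, g (2 * k) = f (2 * k + 1) := by
    intro k
    rw [hgf, pow_mul]
    simp
  have hgo : ∀ k : ℕ, g (2 * k + 1) = -f (2 * k + 2) := by
    intro k
    rw [hgf, pow_succ, pow_mul]
    simp
  have hse : Summable (fun k ↦ f (2 * k)) :=
    (hsumf.comp_injective (fun a b h ↦ by dsimp only at h; omega : Function.Injective (fun k : ℕ ↦ 2 * k)))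
  have hso : Summable (fun k ↦ f (2 * k + 1)) :=
    (hsumf.comp_injective (fun a b h ↦ by dsimp only at h; omega : Function.Injective (fun k : ℕ ↦ 2 * k + 1)))
  have hso2 : Summable (fun k ↦ f (2 * k + 2)) :=
    (hsumf.comp_injective (fun a b h ↦ by dsimp only at h; omega : Function.Injective (fun k : ℕ ↦ 2 * k + 2)))
  have T_all : ∑' n, f (n + 1) = riemannZeta z := by
    have := Summable.tsum_eq_zero_add hsumf
    rw [hf0, zero_add] at this
    rw [← this, ← hzeta]
  have T_even : ∑' k, f (2 * k) = 2 ^ (-z) * riemannZeta z := by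
    rw [tsum_congr hkey, tsum_mul_left, ← hzeta]
  have T_even2 : ∑' k, f (2 * k + 2) = 2 ^ (-z) * riemannZeta z := by
    have h1 : ∀ k : ℕ, f (2 * k + 2) = 2 ^ (-z) * f (k + 1) := by
      intro k
      rw [show 2 * k + 2 = 2 * (k + 1) by ring, hkey]
    rw [tsum_congr h1, tsum_mul_left, T_all]
  have T_odd : ∑' k, f (2 * k + 1) = riemannZeta z - 2 ^ (-z) * riemannZeta z := by
    have := tsum_even_add_odd hse hso
    rw [T_even, ← hzeta] at this
    linear_combination this
  have hsge : Summable (fun k ↦ g (2 * k)) := hso.congr (fun k ↦ (hge k).symm)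
  have hsgo : Summable (fun k ↦ g (2 * k + 1)) := hso2.neg.congr (fun k ↦ (hgo k).symm)
  have := tsum_even_add_odd hsge hsgo
  rw [tsum_congr hge, tsum_congr hgo, T_odd, tsum_neg, T_even2] at this
  rw [hg] at this
  rw [← this]
  have h2 : (2 : ℂ) ^ (1 - z) = 2 * 2 ^ (-z) := by
    rw [show (1 : ℂ) - z = 1 + -z by ring, Complex.cpow_add _ _ two_ne_zero, Complex.cpow_one]
  rw [h2]
  ring

lemma hasSum_coshF {t : ℝ} (ht : 0 < t) :
    HasSum (fun n : ℕ ↦ (4 * (-1) ^ n * ((n : ℝ) + 1)) * Real.exp (-(2 * ((n : ℝ) + 1)) * t))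
      (1 / Real.cosh t ^ 2) := by
  set x : ℝ := -Real.exp (-2 * t) with hxdef
  have hx : ‖x‖ < 1 := by
    rw [norm_neg, Real.norm_eq_abs, Real.abs_exp]
    exact Real.exp_lt_one_iff.mpr (by linarith)
  have h1 : HasSum (fun n : ℕ ↦ (n : ℝ) * x ^ n) (x / (1 - x) ^ 2) :=
    hasSum_coe_mul_geometric_of_norm_lt_one hx
  have h2 : HasSum (fun n : ℕ ↦ x ^ n) (1 - x)⁻¹ := hasSum_geometric_of_norm_lt_one hx
  have h3 := (h1.add h2).mul_left (4 * Real.exp (-2 * t))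
  have hterm : ∀ n : ℕ,
      4 * Real.exp (-2 * t) * ((n : ℝ) * x ^ n + x ^ n) =
      (4 * (-1) ^ n * ((n : ℝ) + 1)) * Real.exp (-(2 * ((n : ℝ) + 1)) * t) := by
    intro n
    have hxp : x ^ n = (-1) ^ n * Real.exp (-2 * t) ^ n := by
      rw [hxdef, neg_pow, mul_comm]
    have hexp : Real.exp (-(2 * ((n : ℝ) + 1)) * t) =
        Real.exp (-2 * t) * Real.exp (-2 * t) ^ n := by
      rw [← Real.exp_nat_mul, ← Real.exp_add]
      ring_nf
    rw [hxp, hexp]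
    ring
  have hsumval : 4 * Real.exp (-2 * t) * (x / (1 - x) ^ 2 + (1 - x)⁻¹) =
      1 / Real.cosh t ^ 2 := by
    have hc := Real.cosh_pos t
    have hu := Real.exp_pos (-t)
    have hee : Real.exp (-2 * t) = Real.exp (-t) * Real.exp (-t) := by
      rw [← Real.exp_add]; ring_nf
    have hev : Real.exp t * Real.exp (-t) = 1 := by rw [← Real.exp_add]; simp
    have h1E : 1 + Real.exp (-2 * t) = Real.exp (-t) * (Real.exp t + Real.exp (-t)) := by
      rw [mul_add, mul_comm (Real.exp (-t)) (Real.exp t), hev, ← hee]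
    have hcosh : Real.exp t + Real.exp (-t) = 2 * Real.cosh t := by rw [Real.cosh_eq]; ring
    have hne : (0:ℝ) < 1 + Real.exp (-2 * t) := by positivity
    rw [hxdef, sub_neg_eq_add]
    have step1 : -Real.exp (-2 * t) / (1 + Real.exp (-2 * t)) ^ 2 +
        (1 + Real.exp (-2 * t))⁻¹ = 1 / (1 + Real.exp (-2 * t)) ^ 2 := by
      field_simp
      ring
    rw [step1, h1E, hcosh, mul_one_div, div_eq_div_iff (by positivity) (by positivity), hee]
    ring
  rw [← hsumval]
  exact HasSum.congr_fun h3 (fun n ↦ (hterm n).symm) |>.congr_fun (fun n ↦ rfl)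

lemma mellin_coshF {s : ℂ} (hs : 1 < s.re) :
    mellin coshF (s + 1) =
      2 ^ (1 - s) * (1 - 2 ^ (1 - s)) * Complex.Gamma (s + 1) * riemannZeta s := by
  set a : ℕ → ℂ := fun n ↦ 4 * (-1) ^ n * ((n : ℂ) + 1) with ha
  set p : ℕ → ℝ := fun n ↦ 2 * ((n : ℝ) + 1) with hp
  have hp' : ∀ n, a n = 0 ∨ 0 < p n := fun n ↦ Or.inr (by positivity)
  have hs1 : 0 < (s + 1).re := by
    simp only [Complex.add_re, Complex.one_re]; linarith
  have hs1' : (s + 1) ≠ 0 := fun h ↦ by simp [h] at hs1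
  have hF : ∀ t ∈ Ioi (0:ℝ), HasSum (fun n ↦ a n * Real.exp (-p n * t)) (coshF t) := by
    intro t ht
    have h0 := hasSum_coshF (mem_Ioi.mp ht)
    have h2 : coshF t = ((1 / Real.cosh t ^ 2 : ℝ) : ℂ) := by
      simp only [coshF]
      push_cast
      norm_num
    rw [h2]
    refine (Complex.hasSum_ofReal.mpr h0).congr_fun fun n ↦ ?_
    simp only [ha, hp, Complex.ofReal_mul, Complex.ofReal_pow, Complex.ofReal_neg,
      Complex.ofReal_one, Complex.ofReal_add, Complex.ofReal_natCast, Complex.ofReal_ofNat]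
  have hnorm : ∀ n : ℕ, ‖a n‖ = 4 * ((n : ℝ) + 1) := by
    intro n
    have : ((n : ℂ) + 1) = (((n : ℝ) + 1 : ℝ) : ℂ) := by push_cast; ring
    rw [ha]
    simp only [norm_mul, norm_pow, norm_neg, norm_one, one_pow, mul_one, this,
      Complex.norm_real, Real.norm_eq_abs]
    rw [abs_of_pos (by positivity)]
    norm_num
  have h_sum : Summable (fun n ↦ ‖a n‖ / (p n) ^ (s + 1).re) := by
    set σ : ℝ := (s + 1).re with hσ
    have hσ2 : 2 < σ := by
      rw [hσ]; simp only [Complex.add_re, Complex.one_re]; linarith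
    have base : Summable (fun n : ℕ ↦ 4 / ((n : ℝ) + 1) ^ (σ - 1)) := by
      have h1 : Summable (fun n : ℕ ↦ 1 / (n : ℝ) ^ (σ - 1)) :=
        Real.summable_one_div_nat_rpow.mpr (by linarith)
      have h2 := (summable_nat_add_iff 1).mpr h1
      have h3 := h2.mul_left 4
      refine h3.congr fun n ↦ ?_
      push_cast
      ring
    refine Summable.of_nonneg_of_le (fun n ↦ by positivity) (fun n ↦ ?_) base
    rw [hnorm]
    have hd : ((n : ℝ) + 1) ^ σ ≤ (p n) ^ σ := by
      apply Real.rpow_le_rpow (by positivity) (by rw [hp]; dsimp; linarith) (by linarith)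
    have he : 4 / ((n : ℝ) + 1) ^ (σ - 1) = 4 * ((n : ℝ) + 1) / ((n : ℝ) + 1) ^ σ := by
      rw [Real.rpow_sub (by positivity), Real.rpow_one]
      field_simp
    rw [he]
    exact div_le_div_of_nonneg_left (by positivity) (by positivity) hd
  have H := hasSum_mellin hp' hs1 hF h_sum
  have hmellin : mellin coshF (s + 1) = ∑' n, Complex.Gamma (s + 1) * a n / (p n : ℂ) ^ (s + 1) :=
    H.tsum_eq.symm
  have hnb : ∀ n : ℕ, ((n : ℂ) + 1) ≠ 0 := fun n ↦ by
    exact_mod_cast Nat.cast_add_one_ne_zero (R := ℂ) n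
  have hterm : ∀ n : ℕ, Complex.Gamma (s + 1) * a n / (p n : ℂ) ^ (s + 1) =
      (Complex.Gamma (s + 1) * 4 * ((2 : ℂ) ^ (s + 1))⁻¹) *
        ((-1 : ℂ) ^ n * ((n : ℂ) + 1) ^ (-s)) := by
    intro n
    have hden : ((p n : ℝ) : ℂ) ^ (s + 1) = (2 : ℂ) ^ (s + 1) * ((n : ℂ) + 1) ^ (s + 1) := by
      have h1 := two_mul_cpow (s + 1) hs1' (n + 1)
      have h2 : ((p n : ℝ) : ℂ) = ((2 * (n + 1) : ℕ) : ℂ) := by rw [hp]; push_cast; ring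
      rw [h2, h1]
      push_cast
      ring_nf
    have hsplit : ((n : ℂ) + 1) ^ (s + 1) = ((n : ℂ) + 1) ^ s * ((n : ℂ) + 1) :=
      by rw [Complex.cpow_add _ _ (hnb n), Complex.cpow_one]
    have hneg : ((n : ℂ) + 1) ^ (-s) = (((n : ℂ) + 1) ^ s)⁻¹ := Complex.cpow_neg _ _
    rw [hden, hsplit, hneg, ha]
    rw [div_eq_mul_inv, mul_inv, mul_inv]
    have hcancel : ((n : ℂ) + 1) * ((n : ℂ) + 1)⁻¹ = 1 := mul_inv_cancel₀ (hnb n)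
    calc Complex.Gamma (s + 1) * (4 * (-1) ^ n * ((n : ℂ) + 1)) *
          (((2 : ℂ) ^ (s + 1))⁻¹ * ((((n : ℂ) + 1) ^ s)⁻¹ * ((n : ℂ) + 1)⁻¹))
        = (Complex.Gamma (s + 1) * 4 * ((2 : ℂ) ^ (s + 1))⁻¹) *
          ((-1 : ℂ) ^ n * (((n : ℂ) + 1) ^ s)⁻¹) * (((n : ℂ) + 1) * ((n : ℂ) + 1)⁻¹) := by
          ring
      _ = _ := by rw [hcancel, mul_one]
  rw [hmellin, tsum_congr hterm, tsum_mul_left, eta_eq hs]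
  have h2ne : ((2 : ℂ)) ^ (s + 1) ≠ 0 := by
    rw [Complex.cpow_def_of_ne_zero two_ne_zero]
    exact Complex.exp_ne_zero _
  have hc : Complex.Gamma (s + 1) * 4 * ((2 : ℂ) ^ (s + 1))⁻¹ =
      2 ^ (1 - s) * Complex.Gamma (s + 1) := by
    have h4 : ((2 : ℂ)) ^ (s + 1) * (2 : ℂ) ^ (1 - s) = 4 := by
      rw [← Complex.cpow_add _ _ two_ne_zero, show (s + 1) + (1 - s) = (2 : ℂ) by ring,
        show (2 : ℂ) = ((2 : ℕ) : ℂ) by norm_num, Complex.cpow_natCast]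
      norm_num
    have hdiv : (2 : ℂ) ^ (1 - s) = 4 * ((2 : ℂ) ^ (s + 1))⁻¹ := by
      rw [eq_comm, mul_inv_eq_iff_eq_mul₀ h2ne]
      linear_combination -h4
    rw [hdiv]
    ring
  rw [hc]
  ring

lemma integral_eq_mellin (s : ℂ) :
    (∫ t in Ioi (0 : ℝ), (t : ℂ) ^ s / (Real.cosh t : ℂ) ^ 2) = mellin coshF (s + 1) := by
  simp only [mellin, coshF, smul_eq_mul, add_sub_cancel_right, mul_one_div]

lemma coshF_cont : Continuous coshF := by
  apply Continuous.div continuous_const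
    ((Complex.continuous_ofReal.comp Real.continuous_cosh).pow 2)
  intro t
  exact pow_ne_zero 2 (by simpa using Complex.ofReal_ne_zero.mpr (Real.cosh_pos t).ne')

lemma coshF_norm (t : ℝ) : ‖coshF t‖ = 1 / Real.cosh t ^ 2 := by
  rw [coshF, norm_div, norm_one, norm_pow, Complex.norm_real, Real.norm_eq_abs,
    abs_of_pos (Real.cosh_pos t)]

lemma coshF_diff {s : ℂ} (hs : -1 < s.re) :
    DifferentiableAt ℂ (fun z : ℂ ↦ mellin coshF (z + 1)) s := by
  have h : DifferentiableAt ℂ (mellin coshF) (s + 1) := by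
    refine mellin_differentiableAt_of_isBigO_rpow_exp (a := 2) two_pos
      (coshF_cont.locallyIntegrable.locallyIntegrableOn _) ?_ (b := 0) ?_ ?_
    · apply IsBigO.of_bound 4
      filter_upwards with t
      rw [coshF_norm, Real.norm_eq_abs, Real.abs_exp]
      have hc := Real.cosh_pos t
      have h1 : Real.exp t ≤ 2 * Real.cosh t := by
        rw [Real.cosh_eq]; have := (Real.exp_pos (-t)).le; linarith
      have hu : 1 ≤ Real.exp (-t) * (2 * Real.cosh t) := by
        calc (1:ℝ) = Real.exp (-t) * Real.exp t := by rw [← Real.exp_add]; simp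
        _ ≤ _ := mul_le_mul_of_nonneg_left h1 (Real.exp_pos (-t)).le
      have he2 : Real.exp (-2 * t) = Real.exp (-t) * Real.exp (-t) := by
        rw [← Real.exp_add]; ring_nf
      rw [he2, div_le_iff₀ (pow_pos hc 2)]
      nlinarith [mul_le_mul hu hu (by norm_num : (0:ℝ) ≤ 1)
        (by positivity : (0:ℝ) ≤ Real.exp (-t) * (2 * Real.cosh t))]
    · apply IsBigO.of_bound 1
      filter_upwards [self_mem_nhdsWithin] with t (ht : 0 < t)
      rw [coshF_norm, Real.norm_eq_abs, neg_zero, Real.rpow_zero, abs_one, mul_one]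
      rw [div_le_one (by positivity)]
      nlinarith [Real.one_le_cosh t]
    · simp only [Complex.add_re, Complex.one_re]; linarith
  have h' : DifferentiableAt ℂ (fun z : ℂ ↦ z + 1) s := differentiableAt_id.add_const 1
  exact h.comp (f := fun z : ℂ ↦ z + 1) s h'

lemma U_preconn : IsPreconnected {s : ℂ | -1 < s.re ∧ s ≠ 1} := by
  have hA : IsPreconnected {s : ℂ | -1 < s.re ∧ 0 < s.im} :=
    ((convex_halfSpace_re_gt (-1)).inter (convex_halfSpace_im_gt 0)).isPreconnected
  have hB : IsPreconnected {s : ℂ | -1 < s.re ∧ s.im < 0} :=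
    ((convex_halfSpace_re_gt (-1)).inter (convex_halfSpace_im_lt 0)).isPreconnected
  have hC : IsPreconnected {s : ℂ | -1 < s.re ∧ s.re < 1} :=
    ((convex_halfSpace_re_gt (-1)).inter (convex_halfSpace_re_lt 1)).isPreconnected
  have hD : IsPreconnected {s : ℂ | 1 < s.re} := (convex_halfSpace_re_gt 1).isPreconnected
  have h1 : IsPreconnected ({s : ℂ | -1 < s.re ∧ 0 < s.im} ∪ {s : ℂ | -1 < s.re ∧ s.re < 1}) :=
    IsPreconnected.union Complex.I (by simp) (by simp) hA hC
  have h2 : IsPreconnected (({s : ℂ | -1 < s.re ∧ 0 < s.im} ∪ {s : ℂ | -1 < s.re ∧ s.re < 1}) ∪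
      {s : ℂ | -1 < s.re ∧ s.im < 0}) :=
    IsPreconnected.union (-Complex.I) (Or.inr (by simp)) (by simp) h1 hB
  have h3 : IsPreconnected ((({s : ℂ | -1 < s.re ∧ 0 < s.im} ∪ {s : ℂ | -1 < s.re ∧ s.re < 1}) ∪
      {s : ℂ | -1 < s.re ∧ s.im < 0}) ∪ {s : ℂ | 1 < s.re}) :=
    IsPreconnected.union (2 + Complex.I)
      (Or.inl (Or.inl (by constructor <;> norm_num)))
      (by norm_num) h2 hD
  convert h3 using 1
  ext z
  simp only [mem_setOf_eq, mem_union]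
  constructor
  · rintro ⟨hre, hne⟩
    rcases lt_trichotomy z.im 0 with h | h | h
    · exact Or.inl (Or.inr ⟨hre, h⟩)
    · rcases lt_trichotomy z.re 1 with h' | h' | h'
      · exact Or.inl (Or.inl (Or.inr ⟨hre, h'⟩))
      · exact absurd (Complex.ext (h'.trans Complex.one_re.symm)
          (h.trans Complex.one_im.symm)) hne
      · exact Or.inr h'
    · exact Or.inl (Or.inl (Or.inl ⟨hre, h⟩))
  · intro h
    constructor
    · rcases h with ((⟨h1, _⟩ | ⟨h1, _⟩) | ⟨h1, _⟩) | h1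
      exacts [h1, h1, h1, by linarith]
    · rintro rfl
      norm_num at h

/-- For `Re s > -1` and `s ≠ 1`:
`∫₀^∞ t^s / cosh²(t) dt = 2^(1-s) (1 - 2^(1-s)) Γ(s+1) ζ(s)`, and equivalently
`ζ(s) = 2^(s-1) / ((1 - 2^(1-s)) Γ(s+1)) · ∫₀^∞ t^s / cosh²(t) dt` whenever
additionally `1 - 2^(1-s) ≠ 0`. -/
theorem zeta_eq_mellin_one_div_cosh_sq (s : ℂ) (hs : -1 < s.re) (hs1 : s ≠ 1) :
    (∫ t in Ioi (0 : ℝ), (t : ℂ) ^ s / (Real.cosh t : ℂ) ^ 2) =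
      (2 : ℂ) ^ (1 - s) * (1 - (2 : ℂ) ^ (1 - s)) * Complex.Gamma (s + 1) *
        riemannZeta s ∧
    (1 - (2 : ℂ) ^ (1 - s) ≠ 0 →
      riemannZeta s =
        (2 : ℂ) ^ (s - 1) / ((1 - (2 : ℂ) ^ (1 - s)) * Complex.Gamma (s + 1)) *
          ∫ t in Ioi (0 : ℝ), (t : ℂ) ^ s / (Real.cosh t : ℂ) ^ 2) := by
  have hΓ : Complex.Gamma (s + 1) ≠ 0 := by
    apply Complex.Gamma_ne_zero
    intro m h
    have : (s + 1).re = (-(m : ℂ)).re := by rw [h]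
    simp only [Complex.add_re, Complex.one_re, Complex.neg_re, Complex.natCast_re] at this
    have : (0 : ℝ) ≤ m := Nat.cast_nonneg m
    linarith
  have key : (∫ t in Ioi (0 : ℝ), (t : ℂ) ^ s / (Real.cosh t : ℂ) ^ 2) =
      (2 : ℂ) ^ (1 - s) * (1 - (2 : ℂ) ^ (1 - s)) * Complex.Gamma (s + 1) * riemannZeta s := by
    rw [integral_eq_mellin]
    set U : Set ℂ := {z : ℂ | -1 < z.re ∧ z ≠ 1} with hU
    have hUopen : IsOpen U := by
      refine (isOpen_lt continuous_const Complex.continuous_re).inter isOpen_ne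
    set f1 : ℂ → ℂ := fun z ↦ mellin coshF (z + 1) with hf1
    set f2 : ℂ → ℂ := fun z ↦
      2 ^ (1 - z) * (1 - 2 ^ (1 - z)) * Complex.Gamma (z + 1) * riemannZeta z with hf2
    have hd1 : AnalyticOnNhd ℂ f1 U := by
      apply DifferentiableOn.analyticOnNhd _ hUopen
      intro z hz
      exact (coshF_diff hz.1).differentiableWithinAt
    have hd2 : AnalyticOnNhd ℂ f2 U := by
      apply DifferentiableOn.analyticOnNhd _ hUopen
      intro z hz
      apply DifferentiableAt.differentiableWithinAt
      have hc : DifferentiableAt ℂ (fun z : ℂ ↦ (2 : ℂ) ^ (1 - z)) z :=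
        ((differentiable_const (1:ℂ)).sub differentiable_id).differentiableAt.const_cpow
          (Or.inl two_ne_zero)
      have hg : DifferentiableAt ℂ (fun z : ℂ ↦ Complex.Gamma (z + 1)) z := by
        refine DifferentiableAt.comp z (Complex.differentiableAt_Gamma _ fun m h ↦ ?_)
          (differentiableAt_id.add_const 1)
        have : (z + 1).re = (-(m : ℂ)).re := by rw [h]
        simp only [Complex.add_re, Complex.one_re, Complex.neg_re, Complex.natCast_re] at this
        have hm : (0 : ℝ) ≤ m := Nat.cast_nonneg m
        have := hz.1
        linarith
      exact ((hc.mul (hc.const_sub 1)).mul hg).mul (differentiableAt_riemannZeta hz.2)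
    have h2U : (2 : ℂ) ∈ U := by
      constructor
      · norm_num
      · intro h
        have := congrArg Complex.re h
        norm_num at this
    have hev : f1 =ᶠ[nhds 2] f2 := by
      have hopen : IsOpen {z : ℂ | 1 < z.re} := isOpen_lt continuous_const Complex.continuous_re
      filter_upwards [hopen.mem_nhds (by norm_num : (2:ℂ) ∈ {z : ℂ | 1 < z.re})] with z hz
      exact mellin_coshF hz
    have := hd1.eqOn_of_preconnected_of_eventuallyEq hd2 U_preconn h2U hev
      (show s ∈ U from ⟨hs, hs1⟩)
    exact this
  refine ⟨key, fun h ↦ ?_⟩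
  have h2p : (2 : ℂ) ^ (s - 1) * (2 : ℂ) ^ (1 - s) = 1 := by
    rw [← Complex.cpow_add _ _ two_ne_zero]
    ring_nf
    exact Complex.cpow_zero 2
  have hmain : (2 : ℂ) ^ (s - 1) * ((2:ℂ) ^ (1 - s) * (1 - (2:ℂ) ^ (1 - s)) *
      Complex.Gamma (s + 1) * riemannZeta s) =
      riemannZeta s * ((1 - (2:ℂ) ^ (1 - s)) * Complex.Gamma (s + 1)) := by
    linear_combination (riemannZeta s * (1 - (2:ℂ) ^ (1 - s)) * Complex.Gamma (s + 1)) * h2p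
  rw [key, div_mul_eq_mul_div, hmain, mul_div_assoc, div_self (mul_ne_zero h hΓ), mul_one]
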